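/- arXiv:2004.03029 — 4 statements merged into one kernel-verified Lean document; each statement's English description precedes it below -/
import Mathlib

section
/- The map F : ℝⁿ → ℝⁿ defined componentwise by F(x)ᵢ = max(g, xᵢ), with g ≥ 0 fixed, is Newton (slantly) differentiable on ℝⁿ with generalized derivative G(x) = diag(m(x)), where m(x)ᵢ = 1 if xᵢ ≥ g and m(x)ᵢ = 0 if xᵢ < g; i.e., lim_{h→0} ‖F(x+h) − F(x) − G(x+h)h‖/‖h‖ = 0 for all x ∈ ℝⁿ. -/
/-!
The remainder is not merely small but eventually zero. Each coordinate of `x + h` stays on the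
same side of the kink of `max g` as `x i` once `h` is small, unless `x i = g`; and at the kink
the slope chosen at `x + h` is exact on that side. Hence `F (x + h) - F x = G (x + h) h` for all
small `h`.
-/

open Filter Topology

theorem max_add_sub_max_eq_ite_mul {c a t : ℝ} (h : a ≠ c → |t| < |a - c|) :
    max c (a + t) - max c a = (if c ≤ a + t then 1 else 0) * t := by
  rcases lt_trichotomy a c with hac | rfl | hca
  · have hat : a + t < c := by
      have := h hac.ne
      rw [abs_of_neg (sub_neg.2 hac)] at this
      linarith [le_abs_self t]
    rw [if_neg hat.not_ge, max_eq_left hat.le, max_eq_left hac.le]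
    ring
  · split_ifs with hat
    · rw [max_eq_right hat, max_self]; ring
    · rw [max_eq_left (not_le.1 hat).le, max_self]; ring
  · have hat : c < a + t := by
      have := h hca.ne'
      rw [abs_of_pos (sub_pos.2 hca)] at this
      linarith [neg_abs_le t]
    rw [if_pos hat.le, max_eq_right hat.le, max_eq_right hca.le]
    ring

theorem eventually_abs_apply_lt_abs_sub {ι : Type*} [Fintype ι] (x : EuclideanSpace ℝ ι) (c : ℝ) :
    ∀ᶠ h in 𝓝 (0 : EuclideanSpace ℝ ι), ∀ i, x i ≠ c → |h i| < |x i - c| := by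
  refine eventually_all.2 fun i => ?_
  by_cases hxi : x i = c
  · exact Eventually.of_forall fun _ hne => absurd hxi hne
  · have hcont : Continuous fun h : EuclideanSpace ℝ ι => |h i| := by fun_prop
    have hpos : |(0 : EuclideanSpace ℝ ι) i| < |x i - c| := by
      simpa using sub_ne_zero.2 hxi
    exact (hcont.continuousAt.eventually_lt continuousAt_const hpos).mono fun _ hh _ => hh

theorem eventually_max_add_sub_max_eq_ite_mul {ι : Type*} [Fintype ι]
    (x : EuclideanSpace ℝ ι) (c : ℝ) :
    ∀ᶠ h in 𝓝 (0 : EuclideanSpace ℝ ι), ∀ i,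
      max c (x i + h i) - max c (x i) = (if c ≤ x i + h i then 1 else 0) * h i :=
  (eventually_abs_apply_lt_abs_sub x c).mono fun _ hh i => max_add_sub_max_eq_ite_mul (hh i)

theorem stmt_3_general (n : ℕ) (g : ℝ)
    (F : EuclideanSpace ℝ (Fin n) → EuclideanSpace ℝ (Fin n))
    (hF : ∀ x i, F x i = max g (x i))
    (m : EuclideanSpace ℝ (Fin n) → Fin n → ℝ)
    (hm : ∀ x i, m x i = if g ≤ x i then 1 else 0) :
    ∀ x : EuclideanSpace ℝ (Fin n),
      Filter.Tendsto
        (fun h : EuclideanSpace ℝ (Fin n) =>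
          ‖F (x + h) - F x - (show EuclideanSpace ℝ (Fin n) from WithLp.toLp 2 fun i => m (x + h) i * h i)‖ / ‖h‖)
        (nhdsWithin 0 {0}ᶜ) (nhds 0) := by
  intro x
  refine tendsto_const_nhds.congr' ?_
  filter_upwards [nhdsWithin_le_nhds (eventually_max_add_sub_max_eq_ite_mul x g)] with h hh
  have hres : F (x + h) - F x - WithLp.toLp 2 (fun i => m (x + h) i * h i) = 0 := by
    ext i
    simp only [PiLp.sub_apply, PiLp.zero_apply, hF, hm]
    exact sub_eq_zero.2 (hh i)
  simp [hres]

/-- The componentwise map F(x)ᵢ = max(g, xᵢ) on ℝⁿ is Newton (slantly)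
differentiable with generalized derivative G(x) = diag(m(x)), where
m(x)ᵢ = 1 if xᵢ ≥ g and 0 otherwise:
lim_{h→0} ‖F(x+h) − F(x) − G(x+h)h‖/‖h‖ = 0 for every x. -/
theorem stmt_3 (n : ℕ) (g : ℝ) (hg : 0 ≤ g)
    (F : EuclideanSpace ℝ (Fin n) → EuclideanSpace ℝ (Fin n))
    (hF : ∀ x i, F x i = max g (x i))
    (m : EuclideanSpace ℝ (Fin n) → Fin n → ℝ)
    (hm : ∀ x i, m x i = if g ≤ x i then 1 else 0) :
    ∀ x : EuclideanSpace ℝ (Fin n),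
      Filter.Tendsto
        (fun h : EuclideanSpace ℝ (Fin n) =>
          ‖F (x + h) - F x - (show EuclideanSpace ℝ (Fin n) from WithLp.toLp 2 fun i => m (x + h) i * h i)‖ / ‖h‖)
        (nhdsWithin 0 {0}ᶜ) (nhds 0) :=
  stmt_3_general n g F hF m hm
end

section
/- Let F : ℝˡ → ℝˡ be Newton differentiable on an open neighborhood U of a root x* (F(x*) = 0) with generalized derivative G, and suppose there exists M > 0 with ‖G(y)⁻¹‖ ≤ M for all y ∈ U. Then the semismooth Newton iteration x_{k+1} = x_k − G(x_k)⁻¹ F(x_k) converges superlinearly to x*, provided ‖x₀ − x*‖ is sufficiently small; that is, ‖x_{k+1} − x*‖ / ‖x_k − x*‖ → 0. -/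
/-!
The Newton step error is `x - G(x)⁻¹ F(x) - x* = -G(x)⁻¹ (F(x) - F(x*) - G(x)(x - x*))`, which is
`o(‖x - x*‖)` by Newton differentiability at `x*` and the uniform bound on `G⁻¹`. Any iteration
whose error map is `o(x - x*)` at `x*` halves the error near `x*`, so it converges there, and along
the converging iterates the `o`-estimate is exactly the superlinear rate.
-/

open Asymptotics Filter Topology

section Iteration

variable {E : Type*} [NormedAddCommGroup E]

theorem norm_iterate_sub_le_pow {T : E → E} {a : E} {ε q : ℝ} (hq₀ : 0 ≤ q) (hq₁ : q ≤ 1)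
    (hT : ∀ y, ‖y - a‖ < ε → ‖T y - a‖ ≤ q * ‖y - a‖) {x : ℕ → E}
    (hx₀ : ‖x 0 - a‖ < ε) (hx : ∀ k, x (k + 1) = T (x k)) (k : ℕ) :
    ‖x k - a‖ ≤ q ^ k * ‖x 0 - a‖ := by
  induction k with
  | zero => simp
  | succ k ih =>
    have hk : ‖x k - a‖ < ε :=
      calc ‖x k - a‖ ≤ q ^ k * ‖x 0 - a‖ := ih
        _ ≤ ‖x 0 - a‖ := mul_le_of_le_one_left (norm_nonneg _) (pow_le_one₀ hq₀ hq₁)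
        _ < ε := hx₀
    calc ‖x (k + 1) - a‖ = ‖T (x k) - a‖ := by rw [hx k]
      _ ≤ q * ‖x k - a‖ := hT _ hk
      _ ≤ q * (q ^ k * ‖x 0 - a‖) := mul_le_mul_of_nonneg_left ih hq₀
      _ = q ^ (k + 1) * ‖x 0 - a‖ := by ring

theorem tendsto_iterate_of_norm_sub_le {T : E → E} {a : E} {ε q : ℝ} (hq₀ : 0 ≤ q) (hq₁ : q < 1)
    (hT : ∀ y, ‖y - a‖ < ε → ‖T y - a‖ ≤ q * ‖y - a‖) {x : ℕ → E}
    (hx₀ : ‖x 0 - a‖ < ε) (hx : ∀ k, x (k + 1) = T (x k)) :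
    Tendsto x atTop (𝓝 a) := by
  rw [tendsto_iff_norm_sub_tendsto_zero]
  have hgeom : Tendsto (fun k => q ^ k * ‖x 0 - a‖) atTop (𝓝 0) := by
    simpa using (tendsto_pow_atTop_nhds_zero_of_lt_one hq₀ hq₁).mul_const ‖x 0 - a‖
  exact squeeze_zero (fun _ => norm_nonneg _)
    (norm_iterate_sub_le_pow hq₀ hq₁.le hT hx₀ hx) hgeom

theorem exists_superlinear_convergence_of_isLittleO {T : E → E} {a : E}
    (hT : (fun y => T y - a) =o[𝓝 a] (fun y => y - a)) :
    ∃ ε > 0, ∀ x : ℕ → E, ‖x 0 - a‖ < ε → (∀ k, x (k + 1) = T (x k)) →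
      Tendsto x atTop (𝓝 a) ∧
      Tendsto (fun k => ‖x (k + 1) - a‖ / ‖x k - a‖) atTop (𝓝 0) := by
  obtain ⟨ε, hε, hhalf⟩ := Metric.eventually_nhds_iff.mp (hT.def (by norm_num : (0 : ℝ) < 2⁻¹))
  refine ⟨ε, hε, fun x hx₀ hx => ?_⟩
  have hconv : Tendsto x atTop (𝓝 a) :=
    tendsto_iterate_of_norm_sub_le (by norm_num) (by norm_num)
      (fun y hy => hhalf (by rwa [dist_eq_norm])) hx₀ hx
  refine ⟨hconv, ?_⟩
  simpa only [Function.comp_def, hx] using hT.norm_norm.tendsto_div_nhds_zero.comp hconv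

end Iteration

section Newton

variable {𝕜 E : Type*} [NontriviallyNormedField 𝕜] [NormedAddCommGroup E] [NormedSpace 𝕜 E]

theorem isLittleO_remainder_of_tendsto_div {F : E → E} {G : E → E →L[𝕜] E} {a : E}
    (hF : Tendsto (fun h => ‖F (a + h) - F a - G (a + h) h‖ / ‖h‖) (𝓝[≠] 0) (𝓝 0)) :
    (fun y => F y - F a - G y (y - a)) =o[𝓝 a] (fun y => y - a) := by
  have h₀ : (fun h => F (a + h) - F a - G (a + h) h) =o[𝓝 0] (fun h => h) := by
    rw [← nhdsNE_sup_pure]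
    refine IsLittleO.sup ?_ (isLittleO_pure.mpr (by simp))
    refine isLittleO_norm_norm.mp ((isLittleO_iff_tendsto' ?_).mpr hF)
    filter_upwards [self_mem_nhdsWithin] with h hh hzero
    exact absurd (norm_eq_zero.mp hzero) hh
  have hshift : Tendsto (fun y => y - a) (𝓝 a) (𝓝 0) :=
    tendsto_sub_nhds_zero_iff.mpr tendsto_id
  simpa only [Function.comp_def, add_sub_cancel] using h₀.comp_tendsto hshift

theorem newton_step_sub_eq {F : E → E} {A B : E →L[𝕜] E} {a : E} (hBA : B.comp A = .id 𝕜 E)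
    (ha : F a = 0) (y : E) :
    y - B (F y) - a = -B (F y - F a - A (y - a)) := by
  have hB : B (A (y - a)) = y - a := by
    simpa using congrArg (fun L : E →L[𝕜] E => L (y - a)) hBA
  rw [ha, sub_zero, map_sub, hB]
  abel

theorem isLittleO_newton_step {F : E → E} {G Ginv : E → E →L[𝕜] E} {a : E} {M : ℝ}
    (hroot : F a = 0) (hrem : (fun y => F y - F a - G y (y - a)) =o[𝓝 a] (fun y => y - a))
    (hinv : ∀ᶠ y in 𝓝 a, (Ginv y).comp (G y) = .id 𝕜 E) (hbound : ∀ᶠ y in 𝓝 a, ‖Ginv y‖ ≤ M) :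
    (fun y => y - Ginv y (F y) - a) =o[𝓝 a] (fun y => y - a) := by
  have hO : (fun y => Ginv y (F y - F a - G y (y - a))) =O[𝓝 a]
      (fun y => F y - F a - G y (y - a)) :=
    IsBigO.of_bound M (hbound.mono fun y hy => (Ginv y).le_of_opNorm_le hy _)
  refine (hO.trans_isLittleO hrem).neg_left.congr' ?_ EventuallyEq.rfl
  filter_upwards [hinv] with y hy
  exact (newton_step_sub_eq hy hroot y).symm

end Newton

theorem stmt_5_general (l : ℕ)
    (F : EuclideanSpace ℝ (Fin l) → EuclideanSpace ℝ (Fin l))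
    (G Ginv : EuclideanSpace ℝ (Fin l) →
      (EuclideanSpace ℝ (Fin l) →L[ℝ] EuclideanSpace ℝ (Fin l)))
    (U : Set (EuclideanSpace ℝ (Fin l))) (hU : IsOpen U)
    (xstar : EuclideanSpace ℝ (Fin l)) (hxU : xstar ∈ U) (hroot : F xstar = 0)
    (hND : ∀ x ∈ U, Filter.Tendsto
      (fun h : EuclideanSpace ℝ (Fin l) => ‖F (x + h) - F x - G (x + h) h‖ / ‖h‖)
      (nhdsWithin 0 {0}ᶜ) (nhds 0))
    (hinv : ∀ y ∈ U,
      (G y).comp (Ginv y) = ContinuousLinearMap.id ℝ (EuclideanSpace ℝ (Fin l)) ∧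
      (Ginv y).comp (G y) = ContinuousLinearMap.id ℝ (EuclideanSpace ℝ (Fin l)))
    (M : ℝ) (hbound : ∀ y ∈ U, ‖Ginv y‖ ≤ M) :
    ∃ ε > 0, ∀ x : ℕ → EuclideanSpace ℝ (Fin l),
      ‖x 0 - xstar‖ < ε →
      (∀ k, x (k + 1) = x k - Ginv (x k) (F (x k))) →
      Filter.Tendsto x Filter.atTop (nhds xstar) ∧
      Filter.Tendsto (fun k => ‖x (k + 1) - xstar‖ / ‖x k - xstar‖)
        Filter.atTop (nhds 0) := by
  have hnear : ∀ᶠ y in 𝓝 xstar, y ∈ U := hU.mem_nhds hxU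
  exact exists_superlinear_convergence_of_isLittleO <|
    isLittleO_newton_step hroot (isLittleO_remainder_of_tendsto_div (hND xstar hxU))
      (hnear.mono fun y hy => (hinv y hy).2) (hnear.mono hbound)

/-- Superlinear local convergence of the semismooth Newton method: if F is
Newton (slantly) differentiable on an open neighborhood U of a root x* with
generalized derivative G, each G(y) is invertible with inverse Ginv(y) and
‖Ginv(y)‖ ≤ M uniformly on U, then for initial points sufficiently close to x*
the iteration x_{k+1} = x_k − G(x_k)⁻¹F(x_k) converges to x* and
‖x_{k+1} − x*‖/‖x_k − x*‖ → 0. -/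
theorem stmt_5 (l : ℕ)
    (F : EuclideanSpace ℝ (Fin l) → EuclideanSpace ℝ (Fin l))
    (G Ginv : EuclideanSpace ℝ (Fin l) →
      (EuclideanSpace ℝ (Fin l) →L[ℝ] EuclideanSpace ℝ (Fin l)))
    (U : Set (EuclideanSpace ℝ (Fin l))) (hU : IsOpen U)
    (xstar : EuclideanSpace ℝ (Fin l)) (hxU : xstar ∈ U) (hroot : F xstar = 0)
    (hND : ∀ x ∈ U, Filter.Tendsto
      (fun h : EuclideanSpace ℝ (Fin l) => ‖F (x + h) - F x - G (x + h) h‖ / ‖h‖)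
      (nhdsWithin 0 {0}ᶜ) (nhds 0))
    (hinv : ∀ y ∈ U,
      (G y).comp (Ginv y) = ContinuousLinearMap.id ℝ (EuclideanSpace ℝ (Fin l)) ∧
      (Ginv y).comp (G y) = ContinuousLinearMap.id ℝ (EuclideanSpace ℝ (Fin l)))
    (M : ℝ) (hM : 0 < M) (hbound : ∀ y ∈ U, ‖Ginv y‖ ≤ M) :
    ∃ ε > 0, ∀ x : ℕ → EuclideanSpace ℝ (Fin l),
      ‖x 0 - xstar‖ < ε →
      (∀ k, x (k + 1) = x k - Ginv (x k) (F (x k))) →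
      Filter.Tendsto x Filter.atTop (nhds xstar) ∧
      Filter.Tendsto (fun k => ‖x (k + 1) - xstar‖ / ‖x k - xstar‖)
        Filter.atTop (nhds 0) :=
  stmt_5_general l F G Ginv U hU xstar hxU hroot hND hinv M hbound
end

section
/- For any vectors E, F ∈ ℝᵐ and scalars g > 0, γ > 0, the map E ↦ γ g E / max(g, γ‖E‖) is globally Lipschitz continuous on ℝᵐ with Lipschitz constant 2γ. -/
/-!
With `r = g / γ` the map is `γ` times the radial retraction `x ↦ (r / max r ‖x‖) • x` onto the
closed ball of radius `r`, and that retraction is 2-Lipschitz in every real normed space: if `a`, `b`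
are the scaling factors of `x`, `y`, then `a • x - b • y = a • (x - y) + (a - b) • y` with `|a| ≤ 1`
and `|a - b| * ‖y‖ ≤ |‖x‖ - ‖y‖| ≤ ‖x - y‖`.
-/

noncomputable def ballRetraction {V : Type*} [NormedAddCommGroup V] [NormedSpace ℝ V]
    (r : ℝ) (x : V) : V :=
  (r / max r ‖x‖) • x

theorem abs_div_max_sub_div_max_mul_le {r : ℝ} (hr : 0 < r) (s : ℝ) {t : ℝ} (ht : 0 ≤ t) :
    |r / max r s - r / max r t| * t ≤ |s - t| := by
  set M := max r s
  set N := max r t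
  have hrM : r ≤ M := le_max_left r s
  have hrN : r ≤ N := le_max_left r t
  have htN : t ≤ N := le_max_right r t
  have hM : 0 < M := hr.trans_le hrM
  have hN : 0 < N := hr.trans_le hrN
  have hMN : |M - N| ≤ |s - t| := by
    simpa only [M, N, max_comm r] using abs_max_sub_max_le_abs s t r
  have hdiff : |r / M - r / N| = r * |M - N| / (M * N) := by
    rw [div_sub_div _ _ hM.ne' hN.ne', abs_div, abs_of_pos (mul_pos hM hN),
      show r * N - M * r = r * (N - M) by ring, abs_mul, abs_of_pos hr, abs_sub_comm]
  calc |r / M - r / N| * t = r * t / (M * N) * |M - N| := by rw [hdiff]; ring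
    _ ≤ 1 * |M - N| := by
        gcongr
        rw [div_le_one (mul_pos hM hN)]
        exact mul_le_mul hrM htN ht hM.le
    _ ≤ |s - t| := by rwa [one_mul]

theorem lipschitzWith_ballRetraction {V : Type*} [NormedAddCommGroup V] [NormedSpace ℝ V]
    {r : ℝ} (hr : 0 < r) : LipschitzWith 2 (ballRetraction (V := V) r) := by
  refine LipschitzWith.of_dist_le_mul fun x y => ?_
  set a := r / max r ‖x‖
  set b := r / max r ‖y‖
  have ha : |a| ≤ 1 := by
    rw [abs_of_pos (by positivity), div_le_one (hr.trans_le (le_max_left _ _))]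
    exact le_max_left _ _
  have hab : |a - b| * ‖y‖ ≤ ‖x - y‖ :=
    (abs_div_max_sub_div_max_mul_le hr _ (norm_nonneg y)).trans (abs_norm_sub_norm_le x y)
  have hsplit : a • x - b • y = a • (x - y) + (a - b) • y := by
    rw [smul_sub, sub_smul]; abel
  rw [dist_eq_norm, dist_eq_norm, ballRetraction, ballRetraction, hsplit]
  calc ‖a • (x - y) + (a - b) • y‖ ≤ |a| * ‖x - y‖ + |a - b| * ‖y‖ := by
        simpa only [norm_smul, Real.norm_eq_abs] using norm_add_le (a • (x - y)) ((a - b) • y)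
    _ ≤ 1 * ‖x - y‖ + ‖x - y‖ := by gcongr
    _ = (2 : NNReal) * ‖x - y‖ := by push_cast; ring

theorem smul_div_max_eq_smul_ballRetraction {V : Type*} [NormedAddCommGroup V]
    [NormedSpace ℝ V] {γ : ℝ} (hγ : 0 < γ) (g : ℝ) (x : V) :
    (γ * g / max g (γ * ‖x‖)) • x = γ • ballRetraction (g / γ) x := by
  have hmax : max g (γ * ‖x‖) = γ * max (g / γ) ‖x‖ := by
    rw [mul_max_of_nonneg _ _ hγ.le, mul_div_cancel₀ g hγ.ne']
  rw [ballRetraction, smul_smul, hmax, mul_div_mul_left _ _ hγ.ne', ← mul_div_assoc,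
    mul_div_cancel₀ g hγ.ne']

/-- The Huber-regularized multiplier map E ↦ γ g E / max(g, γ‖E‖) is globally
Lipschitz on ℝᵐ (Euclidean norm) with Lipschitz constant 2γ. -/
theorem stmt_12 (m : ℕ) (g γ : ℝ) (hg : 0 < g) (hγ : 0 < γ) :
    ∀ E F : EuclideanSpace ℝ (Fin m),
      ‖(γ * g / max g (γ * ‖E‖)) • E - (γ * g / max g (γ * ‖F‖)) • F‖ ≤
        2 * γ * ‖E - F‖ := by
  intro E F
  have hP := (lipschitzWith_ballRetraction (V := EuclideanSpace ℝ (Fin m))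
    (div_pos hg hγ)).dist_le_mul E F
  rw [dist_eq_norm, dist_eq_norm, NNReal.coe_ofNat] at hP
  rw [smul_div_max_eq_smul_ballRetraction hγ, smul_div_max_eq_smul_ballRetraction hγ,
    ← smul_sub, norm_smul, Real.norm_of_nonneg hγ.le, mul_comm 2 γ, mul_assoc]
  exact mul_le_mul_of_nonneg_left hP hγ.le
end

section
/- Let g₁ ≥ g₂ > 0 and γ > 0, and let q_i(E) := γ g_i E / max(g_i, γ‖E‖) for i = 1, 2. Then for every E ∈ ℝᵐ, ‖q_1(E) − q_2(E)‖ ≤ (g₁ − g₂)·min(1, γ‖E‖/g₂)... in particular ‖q₁(E) − q₂(E)‖ ≤ g₁ − g₂, so the Huber multiplier is Lipschitz in the yield-stress parameter uniformly in E and γ. -/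
/-!
With `t = γ‖E‖`, the scalar `γ g / max(g, t)` times `‖E‖` equals `g t / max(g, t) = min(g, t)`,
so `‖q₁(E) − q₂(E)‖ = |min(g₁, t) − min(g₂, t)|`. This vanishes for `t ≤ g₂`, and otherwise
`min` is `1`-Lipschitz in its first argument.
-/

lemma mul_div_max_eq_min {α : Type*} [Field α] [LinearOrder α] [IsStrictOrderedRing α] {a b : α}
    (ha : 0 < a) : a * b / max a b = min a b := by
  have hmax : max a b ≠ 0 := (lt_max_of_lt_left ha).ne'
  rw [div_eq_iff hmax, min_mul_max]

lemma huber_coeff_mul_eq_min {α : Type*} [Field α] [LinearOrder α] [IsStrictOrderedRing α]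
    {γ g r : α} (hg : 0 < g) :
    γ * g / max g (γ * r) * r = min g (γ * r) := by
  rw [← mul_div_max_eq_min hg]
  ring

lemma norm_huber_smul_sub_huber_smul {V : Type*} [SeminormedAddCommGroup V] [NormedSpace ℝ V]
    {γ g₁ g₂ : ℝ} (hg₁ : 0 < g₁) (hg₂ : 0 < g₂) (x : V) :
    ‖(γ * g₁ / max g₁ (γ * ‖x‖)) • x - (γ * g₂ / max g₂ (γ * ‖x‖)) • x‖ =
      |min g₁ (γ * ‖x‖) - min g₂ (γ * ‖x‖)| := by
  rw [← sub_smul, norm_smul, Real.norm_eq_abs, ← huber_coeff_mul_eq_min hg₁,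
    ← huber_coeff_mul_eq_min hg₂, ← sub_mul, abs_mul, abs_norm]

lemma abs_min_sub_min_le_mul_min {g₁ g₂ t : ℝ} (hg : g₂ ≤ g₁) (hg₂ : 0 < g₂) (ht : 0 ≤ t) :
    |min g₁ t - min g₂ t| ≤ (g₁ - g₂) * min 1 (t / g₂) := by
  rcases le_total t g₂ with htg | htg
  · rw [min_eq_right (htg.trans hg), min_eq_right htg, sub_self, abs_zero]
    exact mul_nonneg (sub_nonneg.2 hg) (le_min zero_le_one (div_nonneg ht hg₂.le))
  · rw [min_eq_left ((one_le_div hg₂).2 htg), mul_one]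
    calc |min g₁ t - min g₂ t| ≤ max |g₁ - g₂| |t - t| := abs_min_sub_min_le_max _ _ _ _
      _ = g₁ - g₂ := by
        rw [sub_self, abs_zero, abs_of_nonneg (sub_nonneg.2 hg), max_eq_left (sub_nonneg.2 hg)]

/-- Lipschitz stability of the Huber multiplier with respect to the yield
stress: for g₁ ≥ g₂ > 0 and qᵢ(E) = γ gᵢ E / max(gᵢ, γ‖E‖),
‖q₁(E) − q₂(E)‖ ≤ (g₁ − g₂)·min(1, γ‖E‖/g₂) ≤ g₁ − g₂ for all E. -/
theorem stmt_19 (m : ℕ) (g₁ g₂ γ : ℝ) (hg : g₁ ≥ g₂) (hg₂ : 0 < g₂)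
    (hγ : 0 < γ) (E : EuclideanSpace ℝ (Fin m)) :
    ‖(γ * g₁ / max g₁ (γ * ‖E‖)) • E - (γ * g₂ / max g₂ (γ * ‖E‖)) • E‖ ≤
      (g₁ - g₂) * min 1 (γ * ‖E‖ / g₂) ∧
    ‖(γ * g₁ / max g₁ (γ * ‖E‖)) • E - (γ * g₂ / max g₂ (γ * ‖E‖)) • E‖ ≤
      g₁ - g₂ := by
  rw [norm_huber_smul_sub_huber_smul (hg₂.trans_le hg) hg₂]
  have hbound := abs_min_sub_min_le_mul_min hg hg₂ (mul_nonneg hγ.le (norm_nonneg E))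
  refine ⟨hbound, hbound.trans ?_⟩
  exact mul_le_of_le_one_right (sub_nonneg.2 hg) (min_le_left _ _)
end
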